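/- Let C be a 3×3 unitary matrix with entries a^{(i,j)}, e^{iΔ} = det C, and λ ∈ ℝ with a^{(1,1)}e^{iλ} − e^{iΔ} conj(a^{(3,3)}) ≠ 0. Then the transfer matrix satisfies tr T(λ) = det T(λ) · conj(tr T(λ)). -/

import Mathlib

open Complex Matrix ComplexConjugate

noncomputable section

/-- The transfer matrix `T(λ)` of a 3×3 coin matrix `M`. -/
def transfer (M : Matrix (Fin 3) (Fin 3) ℂ) (lam : ℝ) : Matrix (Fin 2) (Fin 2) ℂ :=
  (M 0 0 * Complex.exp (lam * Complex.I) - M.det * conj (M 2 2))⁻¹ •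
    !![Complex.exp (lam * Complex.I) * (Complex.exp (lam * Complex.I) - M 1 1),
        -(M 0 2 * Complex.exp (lam * Complex.I)) - M.det * conj (M 2 0);
        M 2 0 * Complex.exp (lam * Complex.I) + M.det * conj (M 0 2),
        -(M.det * (Complex.exp (-(lam * Complex.I)) - conj (M 1 1)))]


/-! Put `z = e^{iλ}`, so that `T(λ) = D⁻¹ • N` with numerator `N` and denominator `D`, both
polynomial in the entries of `C`, their conjugates and `z`, `conj z`. Because `|z| = |det C| = 1`,
`tr N = -(det C) z · conj (tr N)`, and the cofactor identities `det C · conj a^{(i,j)} = adj(C)_{ji}`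
of a unitary matrix give `det N = -(det C) z · |D|²`; after scaling by `D⁻¹` the common factor
`-(det C) z` is exactly what relates `tr T` to `det T · conj (tr T)`. -/

theorem Matrix.adjugate_eq_det_smul_conjTranspose_of_mem_unitaryGroup {n R : Type*} [Fintype n]
    [DecidableEq n] [CommRing R] [StarRing R] {M : Matrix n n R}
    (hM : M ∈ unitaryGroup n R) : M.adjugate = M.det • Mᴴ :=
  calc M.adjugate = (star M * M) * M.adjugate := by rw [Unitary.star_mul_self_of_mem hM, one_mul]
    _ = M.det • Mᴴ := by
      rw [Matrix.mul_assoc, mul_adjugate, Matrix.mul_smul, Matrix.mul_one, star_eq_conjTranspose]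

lemma Matrix.det_mul_star_apply_of_mem_unitaryGroup {n R : Type*} [Fintype n] [DecidableEq n]
    [CommRing R] [StarRing R] {M : Matrix n n R} (hM : M ∈ unitaryGroup n R) (i j : n) :
    M.det * star (M i j) = M.adjugate j i := by
  simp [adjugate_eq_det_smul_conjTranspose_of_mem_unitaryGroup hM]

lemma Matrix.det_mul_star_det_of_mem_unitaryGroup {n R : Type*} [Fintype n] [DecidableEq n]
    [CommRing R] [StarRing R] {M : Matrix n n R} (hM : M ∈ unitaryGroup n R) :
    M.det * star M.det = 1 :=
  Unitary.mul_star_self_of_mem (det_of_mem_unitary hM)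

lemma Complex.exp_ofReal_mul_I_mul_conj (x : ℝ) : exp (x * I) * conj (exp (x * I)) = 1 := by
  rw [mul_conj', norm_exp_ofReal_mul_I]
  simp

lemma Complex.conj_exp_ofReal_mul_I (x : ℝ) : conj (exp (x * I)) = exp (-(x * I)) := by
  rw [← exp_conj]
  simp

lemma Matrix.trace_inv_smul_eq_det_mul_conj_trace {N : Matrix (Fin 2) (Fin 2) ℂ} {w D : ℂ}
    (htr : N.trace = w * conj N.trace) (hdet : N.det = w * (D * conj D)) :
    (D⁻¹ • N).trace = (D⁻¹ • N).det * conj (D⁻¹ • N).trace := by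
  rcases eq_or_ne D 0 with rfl | hD
  · simp
  have hD' : conj D ≠ 0 := (map_ne_zero _).mpr hD
  simp only [trace_smul, det_smul, Fintype.card_fin, smul_eq_mul, map_mul, map_inv₀, hdet]
  field_simp
  linear_combination htr

def transferNumerator (M : Matrix (Fin 3) (Fin 3) ℂ) (z : ℂ) : Matrix (Fin 2) (Fin 2) ℂ :=
  !![z * (z - M 1 1), -(M 0 2 * z) - M.det * conj (M 2 0);
    M 2 0 * z + M.det * conj (M 0 2), -(M.det * (conj z - conj (M 1 1)))]

def transferDenominator (M : Matrix (Fin 3) (Fin 3) ℂ) (z : ℂ) : ℂ :=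
  M 0 0 * z - M.det * conj (M 2 2)

lemma transfer_eq_inv_smul (M : Matrix (Fin 3) (Fin 3) ℂ) (lam : ℝ) :
    transfer M lam = (transferDenominator M (exp (lam * I)))⁻¹ •
      transferNumerator M (exp (lam * I)) := by
  rw [transfer, transferDenominator, transferNumerator, conj_exp_ofReal_mul_I]

lemma trace_transferNumerator {M : Matrix (Fin 3) (Fin 3) ℂ} {z : ℂ}
    (hd : M.det * conj M.det = 1) (hz : z * conj z = 1) :
    (transferNumerator M z).trace = -(M.det * z) * conj (transferNumerator M z).trace := by
  simp only [transferNumerator, trace_fin_two_of, map_add, map_neg, map_mul, map_sub, conj_conj]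
  linear_combination (M.det * conj z - M.det * conj (M 1 1)) * hz + (M 1 1 * z - z ^ 2) * hd

lemma det_transferNumerator {M : Matrix (Fin 3) (Fin 3) ℂ} (hM : M ∈ unitaryGroup (Fin 3) ℂ)
    {z : ℂ} (hz : z * conj z = 1) :
    (transferNumerator M z).det =
      -(M.det * z) * (transferDenominator M z * conj (transferDenominator M z)) := by
  have cof : ∀ i j, M.det * conj (M i j) = M.adjugate j i :=
    det_mul_star_apply_of_mem_unitaryGroup hM
  have c00 : M.det * conj (M 0 0) = M 1 1 * M 2 2 - M 1 2 * M 2 1 := by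
    rw [cof, adjugate_fin_three]; rfl
  have c02 : M.det * conj (M 0 2) = M 1 0 * M 2 1 - M 1 1 * M 2 0 := by
    rw [cof, adjugate_fin_three]; rfl
  have c11 : M.det * conj (M 1 1) = M 0 0 * M 2 2 - M 0 2 * M 2 0 := by
    rw [cof, adjugate_fin_three]; rfl
  have c20 : M.det * conj (M 2 0) = M 0 1 * M 1 2 - M 0 2 * M 1 1 := by
    rw [cof, adjugate_fin_three]; rfl
  have c22 : M.det * conj (M 2 2) = M 0 0 * M 1 1 - M 0 1 * M 1 0 := by
    rw [cof, adjugate_fin_three]; rfl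
  have hd : M.det * conj M.det = 1 := det_mul_star_det_of_mem_unitaryGroup hM
  simp only [transferNumerator, transferDenominator, det_fin_two_of, map_sub, map_mul, conj_conj]
  linear_combination
    (M.det * M 1 1 - M.det ^ 2 * conj (M 0 0) * conj (M 2 2) - z * M.det +
        z * M.det * M 0 0 * conj (M 0 0)) * hz +
      (z * M.det * M 2 2 * conj (M 2 2) - z ^ 2 * M 0 0 * M 2 2) * hd +
      (z * M 0 0 - M.det * conj (M 2 2)) * c00 + (z * M 0 2 + M.det * conj (M 2 0)) * c02 +
      (z ^ 2 - z * M 1 1) * c11 + (z * M 2 0 + M 1 0 * M 2 1 - M 1 1 * M 2 0) * c20 +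
      (z * M 2 2 + M 1 2 * M 2 1 - M 1 1 * M 2 2) * c22 + (M 1 1 - z) * det_fin_three M

theorem trace_transfer_conj_general (M : Matrix (Fin 3) (Fin 3) ℂ)
    (hM : M ∈ Matrix.unitaryGroup (Fin 3) ℂ) (lam : ℝ) :
    (transfer M lam).trace = (transfer M lam).det * conj ((transfer M lam).trace) := by
  have hz := exp_ofReal_mul_I_mul_conj lam
  rw [transfer_eq_inv_smul]
  exact trace_inv_smul_eq_det_mul_conj_trace
    (trace_transferNumerator (det_mul_star_det_of_mem_unitaryGroup hM) hz)
    (det_transferNumerator hM hz)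

/-- `tr T(λ) = det T(λ) · conj (tr T(λ))` for the transfer matrix of a
3×3 unitary coin. -/
theorem trace_transfer_conj (M : Matrix (Fin 3) (Fin 3) ℂ)
    (hM : M ∈ Matrix.unitaryGroup (Fin 3) ℂ) (lam : ℝ)
    (hden : M 0 0 * Complex.exp (lam * Complex.I) - M.det * conj (M 2 2) ≠ 0) :
    (transfer M lam).trace = (transfer M lam).det * conj ((transfer M lam).trace) :=
  trace_transfer_conj_general M hM lam
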